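/- For all complex x̂ in some neighborhood of 0, ₂F₁(1/3, 2/3; 1; 1 − ((1−x̂)/(1+2x̂))³) = (1+2x̂) · ₂F₁(1/3, 2/3; 1; x̂³). (This is Ramanujan's cubic transformation of the Gauss hypergeometric function.) -/

import Mathlib

noncomputable def hyp2F1 (a b c z : ℂ) : ℂ :=
  ∑' n : ℕ, (ascPochhammer ℂ n).eval a * (ascPochhammer ℂ n).eval b /
    ((ascPochhammer ℂ n).eval c * (n.factorial : ℂ)) * z ^ n

/-!
Both sides of the identity, as functions of `x`, are annihilated near `0` by one second-order
linear operator: this is the hypergeometric equation of `F = ₂F₁(1/3, 2/3; 1; ·)` transported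
along `z = x³` for `(1 + 2x) F(x³)`, and along `z = 1 - ((1 - x) / (1 + 2x))³` for the left-hand
side. The point `0` is a regular singular point of that operator with double indicial root `0`,
so a solution vanishing at `0` vanishes identically near `0`: writing it as `x ^ (m + 1) g(x)`
with `g(0) ≠ 0`, the lowest-order term of the equation is `(m + 1)² g(0) ≠ 0`.
-/

open Filter Topology FormalMultilinearSeries

section PowerSeries

variable {𝕜 : Type*} [NontriviallyNormedField 𝕜]

theorem HasFPowerSeriesOnBall.hasSum_ofScalars {f : 𝕜 → 𝕜} {c : ℕ → 𝕜} {r : ENNReal}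
    (h : HasFPowerSeriesOnBall f (ofScalars 𝕜 c) 0 r) {z : 𝕜} (hz : ‖z‖ₑ < r) :
    HasSum (fun n => c n * z ^ n) (f z) := by
  simpa [ofScalars_apply_eq, mul_comm] using h.hasSum (y := z) (by simpa using hz)

theorem HasFPowerSeriesOnBall.deriv_ofScalars [CompleteSpace 𝕜] {f : 𝕜 → 𝕜} {c : ℕ → 𝕜}
    {r : ENNReal} (h : HasFPowerSeriesOnBall f (ofScalars 𝕜 c) 0 r) :
    HasFPowerSeriesOnBall (deriv f) (ofScalars 𝕜 fun n => (n + 1) * c (n + 1)) 0 r := by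
  convert (ContinuousLinearMap.apply 𝕜 𝕜 (1 : 𝕜)).comp_hasFPowerSeriesOnBall h.fderiv using 1
  · rfl
  ext n : 1
  rw [← mkPiRing_coeff_eq (ofScalars 𝕜 _),
    ← mkPiRing_coeff_eq ((ContinuousLinearMap.apply 𝕜 𝕜 (1 : 𝕜)).compFormalMultilinearSeries _)]
  congr 1
  rw [coeff_ofScalars]
  change _ = (ofScalars 𝕜 c).derivSeries.coeff n 1
  rw [derivSeries_coeff_one, coeff_ofScalars, nsmul_eq_mul]
  push_cast
  ring

theorem HasSum.pow_mul_of_shift {b b' : ℕ → 𝕜} {z s : 𝕜} (k : ℕ)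
    (h : HasSum (fun n => b n * z ^ n) s) (hb : ∀ n, b' (n + k) = b n)
    (hb0 : ∀ n < k, b' n = 0) : HasSum (fun n => b' n * z ^ n) (z ^ k * s) := by
  rw [← hasSum_nat_add_iff' k, Finset.sum_eq_zero fun n hn => by
    rw [hb0 n (Finset.mem_range.mp hn), zero_mul], sub_zero]
  have e : (fun n => b' (n + k) * z ^ (n + k)) = fun n => z ^ k * (b n * z ^ n) := by
    funext n
    rw [hb, pow_add]
    ring
  rw [e]
  exact h.mul_left _

end PowerSeries

theorem ordinaryHypergeometricCoefficient_succ {𝕂 : Type*} [Field 𝕂] [CharZero 𝕂] {a b c : 𝕂}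
    (hc : ∀ k : ℕ, (k : 𝕂) ≠ -c) (n : ℕ) :
    (n + 1) * (c + n) * ordinaryHypergeometricCoefficient a b c (n + 1) =
      (a + n) * (b + n) * ordinaryHypergeometricCoefficient a b c n := by
  have hpoch : (ascPochhammer 𝕂 n).eval c ≠ 0 := by
    rw [Ne, ascPochhammer_eval_eq_zero_iff]
    rintro ⟨k, -, hk⟩
    exact hc k hk
  have hcn : c + n ≠ 0 := fun h => hc n (by linear_combination h)
  simp only [ordinaryHypergeometricCoefficient, ascPochhammer_succ_eval, Nat.factorial_succ,
    Nat.cast_mul]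
  field_simp
  push_cast
  ring

section Hypergeometric

variable {𝕂 : Type*} [RCLike 𝕂] {a b c : 𝕂}
  (habc : ∀ k : ℕ, (k : 𝕂) ≠ -a ∧ (k : 𝕂) ≠ -b ∧ (k : 𝕂) ≠ -c)
include habc

theorem hasFPowerSeriesOnBall_ordinaryHypergeometric :
    HasFPowerSeriesOnBall (₂F₁ a b c : 𝕂 → 𝕂) (ordinaryHypergeometricSeries 𝕂 a b c) 0 1 := by
  have h := (ordinaryHypergeometricSeries 𝕂 a b c).hasFPowerSeriesOnBall
    (by rw [ordinaryHypergeometricSeries_radius_eq_one 𝕂 a b c habc]; exact one_pos)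
  rwa [ordinaryHypergeometricSeries_radius_eq_one 𝕂 a b c habc] at h

theorem analyticAt_ordinaryHypergeometric {z : 𝕂} (hz : ‖z‖ < 1) :
    AnalyticAt 𝕂 (₂F₁ a b c) z :=
  (hasFPowerSeriesOnBall_ordinaryHypergeometric habc).analyticAt_of_mem
    (by simpa [← ofReal_norm] using hz)

theorem ordinaryHypergeometric_ode {z : 𝕂} (hz : ‖z‖ < 1) :
    z * (1 - z) * deriv (deriv (₂F₁ a b c)) z + (c - (a + b + 1) * z) * deriv (₂F₁ a b c) z
      - a * b * ₂F₁ a b c z = 0 := by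
  set t := ordinaryHypergeometricCoefficient a b c
  have hF : HasFPowerSeriesOnBall (₂F₁ a b c) (ofScalars 𝕂 t) 0 1 :=
    hasFPowerSeriesOnBall_ordinaryHypergeometric habc
  have hz' : ‖z‖ₑ < 1 := by simpa [← ofReal_norm] using hz
  have hF₀ := hF.hasSum_ofScalars hz'
  have hF₁ := hF.deriv_ofScalars.hasSum_ofScalars hz'
  have hF₂ := hF.deriv_ofScalars.deriv_ofScalars.hasSum_ofScalars hz'
  have hzF₂ := hF₂.pow_mul_of_shift (b' := fun n => n * (n + 1) * t (n + 1)) 1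
    (fun n => by push_cast; ring) (fun n hn => by simp [Nat.lt_one_iff.mp hn])
  have hz2F₂ := hF₂.pow_mul_of_shift (b' := fun n => n * (n - 1) * t n) 2
    (fun n => by push_cast; ring) (fun n hn => by interval_cases n <;> simp)
  have hzF₁ := hF₁.pow_mul_of_shift (b' := fun n => n * t n) 1
    (fun n => by push_cast; ring) (fun n hn => by simp [Nat.lt_one_iff.mp hn])
  have hsum := (hzF₂.add (hF₁.mul_left c)).sub
    ((hz2F₂.add (hzF₁.mul_left (a + b + 1))).add (hF₀.mul_left (a * b)))
  have hzero : (fun n : ℕ => n * (n + 1) * t (n + 1) * z ^ n + c * ((n + 1) * t (n + 1) * z ^ n)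
      - (n * (n - 1) * t n * z ^ n + (a + b + 1) * (n * t n * z ^ n) + a * b * (t n * z ^ n)))
      = 0 := by
    funext n
    rw [Pi.zero_apply]
    linear_combination z ^ n *
      ordinaryHypergeometricCoefficient_succ (a := a) (b := b) (fun k => (habc k).2.2) n
  rw [hzero] at hsum
  linear_combination hsum.unique hasSum_zero

end Hypergeometric

theorem exists_eventually_mul_deriv_eq_pow_mul {𝕜 : Type*} [NontriviallyNormedField 𝕜]
    [CompleteSpace 𝕜] {v v' g : 𝕜 → 𝕜} {n : ℕ} (hg : AnalyticAt 𝕜 g 0)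
    (hv : ∀ᶠ x in 𝓝 0, v x = x ^ n * g x) (hv' : ∀ᶠ x in 𝓝 0, HasDerivAt v (v' x) x) :
    ∃ g₁ : 𝕜 → 𝕜, AnalyticAt 𝕜 g₁ 0 ∧ g₁ 0 = n * g 0 ∧
      ∀ᶠ x in 𝓝 0, x * v' x = x ^ n * g₁ x := by
  refine ⟨fun x => n * g x + x * deriv g x, by fun_prop, by simp, ?_⟩
  filter_upwards [hv', hv.eventually_nhds, hg.eventually_analyticAt] with x hx hvx hgx
  rw [hx.unique (((hasDerivAt_pow n x).mul hgx.differentiableAt.hasDerivAt).congr_of_eventuallyEq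
    hvx)]
  rcases n with _ | n
  · simp
  · simp only [Nat.add_sub_cancel]
    push_cast
    ring

/-- `hind` says that no positive integer is a root of the indicial polynomial
`ρ (ρ - 1) A 0 + ρ B 0` of the equation at its regular singular point `0`. -/
theorem eventually_eq_zero_of_ode {u u' u'' A B C : ℂ → ℂ} (hu0 : u 0 = 0)
    (hu' : ∀ᶠ x in 𝓝 0, HasDerivAt u (u' x) x) (hu'' : ∀ᶠ x in 𝓝 0, HasDerivAt u' (u'' x) x)
    (hA : ContinuousAt A 0) (hB : ContinuousAt B 0) (hC : ContinuousAt C 0)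
    (hind : ∀ m : ℕ, (m : ℂ) * A 0 + B 0 ≠ 0)
    (hode : ∀ᶠ x in 𝓝 0, x * A x * u'' x + B x * u' x + C x * u x = 0) :
    ∀ᶠ x in 𝓝 0, u x = 0 := by
  have hu : AnalyticAt ℂ u 0 := Complex.analyticAt_iff_eventually_differentiableAt.mpr
    (hu'.mono fun x hx => hx.differentiableAt)
  by_contra hne
  obtain ⟨n, g, hg, hg0, hug⟩ := hu.exists_eventuallyEq_pow_smul_nonzero_iff.mpr hne
  simp only [sub_zero, smul_eq_mul] at hug
  obtain ⟨m, rfl⟩ : ∃ m, n = m + 1 := Nat.exists_eq_succ_of_ne_zero fun hn => hg0 (by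
    simpa [hn, hu0] using hug.self_of_nhds.symm)
  obtain ⟨g₁, hg₁, hg₁0, hθu⟩ := exists_eventually_mul_deriv_eq_pow_mul hg hug hu'
  obtain ⟨g₂, hg₂, hg₂0, hθθu⟩ := exists_eventually_mul_deriv_eq_pow_mul hg₁ hθu
    (hu'.and hu'' |>.mono fun x hx => (hasDerivAt_id' x).mul hx.2)
  set Φ := fun x => A x * (g₂ x - g₁ x) + B x * g₁ x + x * C x * g x
  have hΦ : ∀ᶠ x in 𝓝[≠] 0, Φ x = 0 := by
    filter_upwards [nhdsWithin_le_nhds (hode.and (hug.and (hθu.and hθθu))),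
      self_mem_nhdsWithin] with x ⟨hx, hux, hθux, hθθux⟩ hx0
    refine (mul_eq_zero.mp ?_).resolve_left (pow_ne_zero (m + 1) hx0)
    linear_combination x * hx - A x * hθθux + (A x - B x) * hθux - x * C x * hux
  have hΦc : ContinuousAt Φ 0 := by
    have := hg.continuousAt
    have := hg₁.continuousAt
    have := hg₂.continuousAt
    fun_prop
  have hΦ0 : Φ 0 = 0 := tendsto_nhds_unique (hΦc.tendsto.mono_left nhdsWithin_le_nhds)
    (tendsto_const_nhds.congr' (hΦ.mono fun x hx => hx.symm))
  apply mul_ne_zero (mul_ne_zero (hind m) (Nat.cast_add_one_ne_zero m)) hg0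
  simp only [Φ, hg₁0, hg₂0] at hΦ0
  push_cast at hΦ0
  linear_combination hΦ0

section CubicTransformation

noncomputable def cubicMap (x : ℂ) : ℂ := 1 - ((1 - x) / (1 + 2 * x)) ^ 3

theorem hasDerivAt_cubicMap {x : ℂ} (hx : 1 + 2 * x ≠ 0) :
    HasDerivAt cubicMap (9 * (1 - x) ^ 2 / (1 + 2 * x) ^ 4) x := by
  have h := ((((hasDerivAt_id' x).const_sub 1).div
    (((hasDerivAt_id' x).const_mul 2).const_add 1) hx).pow 3).const_sub 1
  refine h.congr_deriv ?_
  norm_num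
  field_simp
  ring

theorem hasDerivAt_cubicMap_deriv {x : ℂ} (hx : 1 + 2 * x ≠ 0) :
    HasDerivAt (fun y => 9 * (1 - y) ^ 2 / (1 + 2 * y) ^ 4)
      (-18 * (1 - x) * (5 - 2 * x) / (1 + 2 * x) ^ 5) x := by
  have h := ((((hasDerivAt_id' x).const_sub 1).pow 2).const_mul 9).div
    ((((hasDerivAt_id' x).const_mul 2).const_add 1).pow 4) (pow_ne_zero 4 hx)
  refine h.congr_deriv ?_
  norm_num
  field_simp
  ring

/-- The operator annihilating `x ↦ (1 + 2x) F(x³)` whenever `F` solves the hypergeometric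
equation with parameters `(1/3, 2/3; 1)`. -/
def cubicOp (v v' v'' x : ℂ) : ℂ :=
  x * (1 + 2 * x) ^ 2 * (1 - x ^ 3) * v'' + (1 + 2 * x) * (1 - 2 * x - 4 * x ^ 3 - 4 * x ^ 4) * v'
    - 2 * (1 - x) ^ 2 * v

theorem cubicOp_comp_cubicMap {x F₀ F₁ F₂ : ℂ} (hx : 1 + 2 * x ≠ 0)
    (h : cubicMap x * (1 - cubicMap x) * F₂ + (1 - 2 * cubicMap x) * F₁ - 2 / 9 * F₀ = 0) :
    cubicOp F₀ (F₁ * (9 * (1 - x) ^ 2 / (1 + 2 * x) ^ 4))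
      (F₂ * (9 * (1 - x) ^ 2 / (1 + 2 * x) ^ 4) ^ 2 +
        F₁ * (-18 * (1 - x) * (5 - 2 * x) / (1 + 2 * x) ^ 5)) x = 0 := by
  unfold cubicOp
  unfold cubicMap at h
  linear_combination (norm := skip) 9 * (1 - x) ^ 2 * h
  -- `field_simp` only recognises the denominator in its normal form `1 + x * 2`
  have hx' : 1 + x * 2 ≠ 0 := by rwa [mul_comm]
  field_simp
  ring

theorem cubicOp_mul_cube {x F₀ F₁ F₂ : ℂ}
    (h : x ^ 3 * (1 - x ^ 3) * F₂ + (1 - 2 * x ^ 3) * F₁ - 2 / 9 * F₀ = 0) :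
    cubicOp ((1 + 2 * x) * F₀) (2 * F₀ + (1 + 2 * x) * (F₁ * (3 * x ^ 2)))
      (2 * (F₁ * (3 * x ^ 2)) + (2 * (F₁ * (3 * x ^ 2)) +
        (1 + 2 * x) * (F₂ * (3 * x ^ 2) ^ 2 + F₁ * (6 * x)))) x = 0 := by
  unfold cubicOp
  linear_combination 9 * x ^ 2 * (1 + 2 * x) ^ 3 * h

theorem eventually_comp_cubicMap_eq_of_hasDerivAt {F F' F'' : ℂ → ℂ}
    (hsol : ∀ᶠ w in 𝓝 0, HasDerivAt F (F' w) w ∧ HasDerivAt F' (F'' w) w ∧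
      w * (1 - w) * F'' w + (1 - 2 * w) * F' w - 2 / 9 * F w = 0) :
    ∀ᶠ x in 𝓝 0, F (cubicMap x) = (1 + 2 * x) * F (x ^ 3) := by
  have hW : Tendsto cubicMap (𝓝 0) (𝓝 0) := by
    simpa [cubicMap] using (hasDerivAt_cubicMap (x := 0) (by norm_num)).continuousAt.tendsto
  have hcube : Tendsto (fun x : ℂ => x ^ 3) (𝓝 0) (𝓝 0) := by
    simpa using (continuous_pow 3).continuousAt.tendsto (x := (0 : ℂ))
  have hnear := ((ContinuousAt.eventually_ne (by fun_prop) (by norm_num) :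
    ∀ᶠ x in 𝓝 (0 : ℂ), 1 + 2 * x ≠ 0).and (hW.eventually hsol)).and (hcube.eventually hsol)
  refine (eventually_eq_zero_of_ode
    (u := fun x => F (cubicMap x) - (1 + 2 * x) * F (x ^ 3))
    (u' := fun x => F' (cubicMap x) * (9 * (1 - x) ^ 2 / (1 + 2 * x) ^ 4) -
      (2 * F (x ^ 3) + (1 + 2 * x) * (F' (x ^ 3) * (3 * x ^ 2))))
    (u'' := fun x => F'' (cubicMap x) * (9 * (1 - x) ^ 2 / (1 + 2 * x) ^ 4) ^ 2 +
        F' (cubicMap x) * (-18 * (1 - x) * (5 - 2 * x) / (1 + 2 * x) ^ 5) -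
      (2 * (F' (x ^ 3) * (3 * x ^ 2)) + (2 * (F' (x ^ 3) * (3 * x ^ 2)) +
        (1 + 2 * x) * (F'' (x ^ 3) * (3 * x ^ 2) ^ 2 + F' (x ^ 3) * (6 * x)))))
    (A := fun x => (1 + 2 * x) ^ 2 * (1 - x ^ 3))
    (B := fun x => (1 + 2 * x) * (1 - 2 * x - 4 * x ^ 3 - 4 * x ^ 4))
    (C := fun x => -2 * (1 - x) ^ 2) ?_ ?_ ?_ (by fun_prop) (by fun_prop) (by fun_prop) ?_ ?_).mono
    fun x hx => sub_eq_zero.mp hx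
  · simp [cubicMap]
  · filter_upwards [hnear] with x ⟨⟨hx, hFw, _⟩, hFc, _⟩
    have hlin := ((hasDerivAt_id' x).const_mul (2 : ℂ)).const_add 1
    refine ((hFw.comp x (hasDerivAt_cubicMap hx)).sub
      (hlin.mul (hFc.comp x (hasDerivAt_pow 3 x)))).congr_deriv ?_
    norm_num
  · filter_upwards [hnear] with x ⟨⟨hx, _, hF'w, _⟩, hFc, hF'c, _⟩
    have hlin := ((hasDerivAt_id' x).const_mul (2 : ℂ)).const_add 1
    refine (((hF'w.comp x (hasDerivAt_cubicMap hx)).mul (hasDerivAt_cubicMap_deriv hx)).sub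
      ((hFc.comp x (hasDerivAt_pow 3 x)).const_mul 2 |>.add
        (hlin.mul ((hF'c.comp x (hasDerivAt_pow 3 x)).mul
          ((hasDerivAt_pow 2 x).const_mul 3))))).congr_deriv ?_
    norm_num
    ring
  · intro m
    norm_num
    exact Nat.cast_add_one_ne_zero m
  · filter_upwards [hnear] with x ⟨⟨hx, _, _, hw⟩, _, _, hc⟩
    have h₁ := cubicOp_comp_cubicMap hx hw
    have h₂ := cubicOp_mul_cube hc
    unfold cubicOp at h₁ h₂
    linear_combination h₁ - h₂

theorem AnalyticAt.eventually_comp_cubicMap_eq {F : ℂ → ℂ} (hF : AnalyticAt ℂ F 0)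
    (hode : ∀ᶠ w in 𝓝 0,
      w * (1 - w) * deriv (deriv F) w + (1 - 2 * w) * deriv F w - 2 / 9 * F w = 0) :
    ∀ᶠ x in 𝓝 0, F (cubicMap x) = (1 + 2 * x) * F (x ^ 3) :=
  eventually_comp_cubicMap_eq_of_hasDerivAt <| hF.eventually_analyticAt.and hode |>.mono
    fun _ ⟨hw, hw'⟩ => ⟨hw.differentiableAt.hasDerivAt, hw.deriv.differentiableAt.hasDerivAt, hw'⟩

end CubicTransformation

theorem hyp2F1_eq_ordinaryHypergeometric (a b c z : ℂ) : hyp2F1 a b c z = ₂F₁ a b c z := by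
  rw [ordinaryHypergeometric_eq_tsum]
  refine tsum_congr fun n => ?_
  rw [smul_eq_mul]
  ring

theorem stmt7 : ∃ ε : ℝ, 0 < ε ∧ ∀ x : ℂ, ‖x‖ < ε →
    hyp2F1 (1/3) (2/3) 1 (1 - ((1-x)/(1+2*x))^3)
      = (1+2*x) * hyp2F1 (1/3) (2/3) 1 (x^3) := by
  have habc (k : ℕ) : (k : ℂ) ≠ -(1 / 3) ∧ (k : ℂ) ≠ -(2 / 3) ∧ (k : ℂ) ≠ -1 := by
    refine ⟨?_, ?_, ?_⟩ <;> intro h <;> have := congrArg Complex.re h <;> norm_num at this <;>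
      linarith [k.cast_nonneg (α := ℝ)]
  have hode : ∀ᶠ w in 𝓝 (0 : ℂ), w * (1 - w) * deriv (deriv (₂F₁ (1 / 3 : ℂ) (2 / 3) 1)) w +
      (1 - 2 * w) * deriv (₂F₁ (1 / 3 : ℂ) (2 / 3) 1) w - 2 / 9 * ₂F₁ (1 / 3 : ℂ) (2 / 3) 1 w
      = 0 := by
    filter_upwards [Metric.ball_mem_nhds (0 : ℂ) one_pos] with w hw
    linear_combination ordinaryHypergeometric_ode habc (mem_ball_zero_iff.mp hw)
  have hF := analyticAt_ordinaryHypergeometric (z := (0 : ℂ)) habc (by simp)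
  obtain ⟨ε, hε, h⟩ := Metric.eventually_nhds_iff.mp (hF.eventually_comp_cubicMap_eq hode)
  refine ⟨ε, hε, fun x hx => ?_⟩
  simpa [hyp2F1_eq_ordinaryHypergeometric, cubicMap] using h (by simpa using hx)
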